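/- Let Q ∈ ℝ^{m_r×d} satisfy ‖Qᵀe_p‖_{ℓ2} ≤ ν√(d/m_r) for every 1 ≤ p ≤ m_r. Let E ∈ ℝ^{m_r×n_r} have at most α_r·m_r nonzero entries in each column, and suppose ‖E‖_{ℓ∞} ≤ s₀·σ*_r·qᵏ/√(m_r n_r). Then for every column index l ∈ {1,…,n_r}: ‖QᵀE e_l‖_{ℓ2} ≤ α_r·ν·√d·s₀·σ*_r·qᵏ/√(n_r). -/

import Mathlib

/-! `Qᵀ E e_l` is a combination of the rows `Qᵀ e_p` over the at most `α_r m_r` nonzero entries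
`E p l` of column `l`; the triangle inequality bounds it by that count times `‖E‖_{ℓ∞}` times the
row bound `ν √(d / m_r)`, and the factors `√m_r` cancel. -/

open Matrix
open scoped BigOperators

noncomputable def l2 {n : ℕ} (v : Fin n → ℝ) : ℝ := Real.sqrt (∑ i, v i ^ 2)

noncomputable def vinf {n : ℕ} (v : Fin n → ℝ) : ℝ := ⨆ i, |v i|

noncomputable def linf {m n : ℕ} (X : Matrix (Fin m) (Fin n) ℝ) : ℝ := ⨆ i, ⨆ j, |X i j|

noncomputable def frob {m n : ℕ} (X : Matrix (Fin m) (Fin n) ℝ) : ℝ :=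
  Real.sqrt (∑ i, ∑ j, X i j ^ 2)

noncomputable def spec {m n : ℕ} (X : Matrix (Fin m) (Fin n) ℝ) : ℝ :=
  ‖LinearMap.toContinuousLinearMap (Matrix.toEuclideanLin X)‖

def supp {m n : ℕ} (X : Matrix (Fin m) (Fin n) ℝ) : Set (Fin m × Fin n) :=
  {p | X p.1 p.2 ≠ 0}

noncomputable def sthr {m n : ℕ} (ζ : ℝ) (X : Matrix (Fin m) (Fin n) ℝ) :
    Matrix (Fin m) (Fin n) ℝ :=
  Matrix.of fun i j => Real.sign (X i j) * max (|X i j| - ζ) 0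

open Finset

lemma l2_eq_norm_toLp {n : ℕ} (v : Fin n → ℝ) : l2 v = ‖WithLp.toLp 2 v‖ := by
  simp [l2, EuclideanSpace.norm_eq, sq_abs]

lemma l2_nonneg {n : ℕ} (v : Fin n → ℝ) : 0 ≤ l2 v :=
  Real.sqrt_nonneg _

lemma l2_smul {n : ℕ} (c : ℝ) (v : Fin n → ℝ) : l2 (c • v) = |c| * l2 v := by
  rw [l2_eq_norm_toLp, l2_eq_norm_toLp, WithLp.toLp_smul, norm_smul, Real.norm_eq_abs]

lemma l2_sum_le {ι : Type*} {n : ℕ} (s : Finset ι) (v : ι → Fin n → ℝ) :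
    l2 (∑ i ∈ s, v i) ≤ ∑ i ∈ s, l2 (v i) := by
  simp only [l2_eq_norm_toLp, WithLp.toLp_sum]
  exact norm_sum_le _ _

lemma linf_nonneg {m n : ℕ} (X : Matrix (Fin m) (Fin n) ℝ) : 0 ≤ linf X :=
  Real.iSup_nonneg fun _ => Real.iSup_nonneg fun _ => abs_nonneg _

lemma abs_le_linf {m n : ℕ} (X : Matrix (Fin m) (Fin n) ℝ) (i : Fin m) (j : Fin n) :
    |X i j| ≤ linf X :=
  (le_ciSup (Set.finite_range fun j' => |X i j'|).bddAbove j).trans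
    (le_ciSup (Set.finite_range fun i' => ⨆ j', |X i' j'|).bddAbove i)

lemma mulVec_eq_sum_support {m n : ℕ} (A : Matrix (Fin m) (Fin n) ℝ) (v : Fin n → ℝ) :
    A *ᵥ v = ∑ p ∈ univ.filter (fun p => v p ≠ 0), v p • A *ᵥ Pi.single p 1 := by
  rw [Finset.sum_filter_of_ne fun p _ h => by contrapose! h; simp [h]]
  conv_lhs => rw [← Finset.univ_sum_single v]
  simp [mulVec_sum]

lemma l2_mulVec_le_card_support_mul {m n : ℕ} (A : Matrix (Fin m) (Fin n) ℝ) (v : Fin n → ℝ)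
    {M B : ℝ} (hv : ∀ p, |v p| ≤ M) (hA : ∀ p, l2 (A *ᵥ Pi.single p 1) ≤ B) :
    l2 (A *ᵥ v) ≤ (univ.filter fun p => v p ≠ 0).card * (M * B) :=
  calc l2 (A *ᵥ v)
      ≤ ∑ p ∈ univ.filter (fun p => v p ≠ 0), |v p| * l2 (A *ᵥ Pi.single p 1) := by
        rw [mulVec_eq_sum_support]
        exact (l2_sum_le _ _).trans_eq (by simp only [l2_smul])
    _ ≤ ∑ p ∈ univ.filter (fun p => v p ≠ 0), M * B :=
        sum_le_sum fun p _ =>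
          mul_le_mul (hv p) (hA p) (l2_nonneg _) ((abs_nonneg _).trans (hv p))
    _ = _ := by rw [sum_const, nsmul_eq_mul]

theorem stmt6_general (mr nr d : ℕ) (k : ℕ) (hm : 0 < mr)
    (ν αr s₀ σr q : ℝ)
    (Q : Matrix (Fin mr) (Fin d) ℝ) (E : Matrix (Fin mr) (Fin nr) ℝ)
    (hQ : ∀ p : Fin mr, l2 (Qᵀ *ᵥ Pi.single p 1) ≤ ν * Real.sqrt ((d : ℝ) / mr))
    (hcol : ∀ j : Fin nr,
      ((Finset.univ.filter fun i => E i j ≠ 0).card : ℝ) ≤ αr * mr)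
    (hE : linf E ≤ s₀ * σr * q ^ k / Real.sqrt ((mr : ℝ) * nr)) :
    ∀ l : Fin nr,
      l2 (Qᵀ *ᵥ fun i => E i l) ≤ αr * ν * Real.sqrt d * s₀ * σr * q ^ k / Real.sqrt nr := by
  intro l
  have hB : 0 ≤ ν * Real.sqrt ((d : ℝ) / mr) := (l2_nonneg _).trans (hQ ⟨0, hm⟩)
  have hsqrt_mr : Real.sqrt mr ≠ 0 := by positivity
  calc l2 (Qᵀ *ᵥ fun i => E i l)
      ≤ (univ.filter fun i => E i l ≠ 0).card
          * (s₀ * σr * q ^ k / Real.sqrt ((mr : ℝ) * nr) * (ν * Real.sqrt ((d : ℝ) / mr))) :=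
        l2_mulVec_le_card_support_mul _ _ (fun i => (abs_le_linf E i l).trans hE) hQ
    _ ≤ αr * mr
          * (s₀ * σr * q ^ k / Real.sqrt ((mr : ℝ) * nr) * (ν * Real.sqrt ((d : ℝ) / mr))) :=
        mul_le_mul_of_nonneg_right (hcol l) (mul_nonneg ((linf_nonneg E).trans hE) hB)
    _ = αr * ν * Real.sqrt d * s₀ * σr * q ^ k / Real.sqrt nr := by
        rw [Real.sqrt_mul (Nat.cast_nonneg _), Real.sqrt_div' _ (Nat.cast_nonneg _)]
        field_simp
        rw [Real.sq_sqrt (Nat.cast_nonneg _)]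
        ring

/-- Lemma 6 of the paper: regional column bound
`‖QᵀE e_l‖_{ℓ2} ≤ α_r·ν·√d·s₀·σ*_r·qᵏ/√(n_r)`. -/
theorem stmt6 (mr nr d : ℕ) (k : ℕ) (hm : 0 < mr) (hn : 0 < nr) (hd : 0 < d)
    (ν αr s₀ σr q : ℝ) (hν : 0 < ν) (hαr : 0 < αr) (hs₀ : 0 < s₀)
    (hσr : 0 < σr) (hq : 0 < q)
    (Q : Matrix (Fin mr) (Fin d) ℝ) (E : Matrix (Fin mr) (Fin nr) ℝ)
    (hQ : ∀ p : Fin mr, l2 (Qᵀ *ᵥ Pi.single p 1) ≤ ν * Real.sqrt ((d : ℝ) / mr))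
    (hcol : ∀ j : Fin nr,
      ((Finset.univ.filter fun i => E i j ≠ 0).card : ℝ) ≤ αr * mr)
    (hE : linf E ≤ s₀ * σr * q ^ k / Real.sqrt ((mr : ℝ) * nr)) :
    ∀ l : Fin nr,
      l2 (Qᵀ *ᵥ fun i => E i l) ≤ αr * ν * Real.sqrt d * s₀ * σr * q ^ k / Real.sqrt nr :=
  stmt6_general mr nr d k hm ν αr s₀ σr q Q E hQ hcol hE
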